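/- Let H and Q be bounded operators on a complex Hilbert space, and for s ∈ ℝ set Q(s) = e^{iHs} Q e^{−iHs} and I(s) = i e^{iHs} (HQ − QH) e^{−iHs}. Then for every t ≥ 0, ∫₀ᵗ∫₀ᵗ∫₀ᵗ T(I(t₁)I(t₂)I(t₃)) dt₃ dt₂ dt₁ + 3 ∫₀ᵗ∫₀ᵗ T(I(t₁)·[Q(t₂),I(t₂)]) dt₂ dt₁ + ∫₀ᵗ [Q(s),[Q(s),I(s)]] ds = Q(t)³ − 3 Q(t)² Q + 3 Q(t) Q² − Q³, where T denotes time ordering (factors arranged with decreasing time arguments from left to right) and [A,B] = AB − BA. (This is the third-order coefficient of the identity equating the T-ordered exponential of the interaction Hamiltonian with the Matthews T*-ordered exponential of the current, with the contact terms made explicit.) -/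

import Mathlib

/-!
With `K = λ I + λ²/2 [Q, I] + λ³/6 [Q, [Q, I]] + ⋯`, the function `U(t) = e^{λ Q(t)} e^{-λ Q(0)}`
solves `U' = K U`, `U(0) = 1`, so it is the time-ordered exponential of `∫₀ᵗ K`; the identity is
six times the coefficient of `λ³` on both sides. Only `Q' = I` enters, so we prove it for any
differentiable `F` with continuous derivative `f`.

The time-ordered integrals are evaluated directly. Splitting at the diagonals, the fundamental
theorem of calculus and one integration by parts for the two-point integral turn all three terms
into integrals `∫₀ᵗ p(s) ds` with `p` polynomial in `F s`, `f s`, `F 0`, `F t`; their sum is the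
derivative of an explicit noncommutative cubic in `F s`.
-/

open MeasureTheory Filter

/-- Heisenberg evolution of the charge: `Q(s) = e^{iHs} Q e^{−iHs}`. -/
noncomputable def heisQ {A : Type*} [NormedRing A] [NormedAlgebra ℂ A] [CompleteSpace A]
    (H Q : A) (s : ℝ) : A :=
  NormedSpace.exp ((Complex.I * (s : ℂ)) • H) * Q *
    NormedSpace.exp ((-(Complex.I * (s : ℂ))) • H)

/-- The current `I(s) = i e^{iHs}(HQ − QH)e^{−iHs}`, the time derivative of `Q(s)`. -/
noncomputable def heisI {A : Type*} [NormedRing A] [NormedAlgebra ℂ A] [CompleteSpace A]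
    (H Q : A) (s : ℝ) : A :=
  Complex.I • (NormedSpace.exp ((Complex.I * (s : ℂ)) • H) * (H * Q - Q * H) *
    NormedSpace.exp ((-(Complex.I * (s : ℂ))) • H))

/-- Time-ordered product of two operator-valued functions evaluated at `t₁, t₂`:
the factor with the larger time argument is placed to the left. -/
noncomputable def timeOrder2 {A : Type*} [Mul A] (f g : ℝ → A) (t₁ t₂ : ℝ) : A :=
  if t₂ ≤ t₁ then f t₁ * g t₂ else g t₂ * f t₁

/-- Time-ordered product of three factors `f t₁, f t₂, f t₃`: factors with larger time
arguments are placed further to the left. -/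
noncomputable def timeOrder3 {A : Type*} [Mul A] (f : ℝ → A) (t₁ t₂ t₃ : ℝ) : A :=
  if t₂ ≤ t₁ ∧ t₃ ≤ t₂ then f t₁ * f t₂ * f t₃
  else if t₃ ≤ t₁ ∧ t₂ ≤ t₃ then f t₁ * f t₃ * f t₂
  else if t₁ ≤ t₂ ∧ t₃ ≤ t₁ then f t₂ * f t₁ * f t₃
  else if t₃ ≤ t₂ ∧ t₁ ≤ t₃ then f t₂ * f t₃ * f t₁
  else if t₁ ≤ t₃ ∧ t₂ ≤ t₁ then f t₃ * f t₁ * f t₂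
  else f t₃ * f t₂ * f t₁

open Set intervalIntegral

section IntervalIntegral

variable {A : Type*} [NormedRing A] [NormedAlgebra ℝ A] [CompleteSpace A] {g : ℝ → A}
  {a b : ℝ}

theorem intervalIntegral.integral_const_mul_mul_const (hg : IntervalIntegrable g volume a b)
    (x y : A) : ∫ s in a..b, x * g s * y = x * (∫ s in a..b, g s) * y := by
  simpa using (ContinuousLinearMap.mulLeftRight ℝ A x y).intervalIntegral_comp_comm hg

theorem intervalIntegral.integral_const_mul_of_intervalIntegrable
    (hg : IntervalIntegrable g volume a b) (x : A) :
    ∫ s in a..b, x * g s = x * ∫ s in a..b, g s := by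
  simpa using integral_const_mul_mul_const hg x 1

theorem intervalIntegral.integral_mul_const_of_intervalIntegrable
    (hg : IntervalIntegrable g volume a b) (y : A) :
    ∫ s in a..b, g s * y = (∫ s in a..b, g s) * y := by
  simpa using integral_const_mul_mul_const hg 1 y

end IntervalIntegral

section Split

variable {E : Type*} [NormedAddCommGroup E] [NormedSpace ℝ E] {g g₁ g₂ g₃ : ℝ → E}
  {a b c d : ℝ}

theorem intervalIntegral.integral_eq_add_of_eqOn_Ioo (hab : a ≤ b) (hbc : b ≤ c)
    (h₁ : EqOn g g₁ (Ioo a b)) (h₂ : EqOn g g₂ (Ioo b c))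
    (hg₁ : IntervalIntegrable g₁ volume a b) (hg₂ : IntervalIntegrable g₂ volume b c) :
    ∫ s in a..c, g s = (∫ s in a..b, g₁ s) + ∫ s in b..c, g₂ s := by
  rw [← uIoo_of_le hab] at h₁
  rw [← uIoo_of_le hbc] at h₂
  rw [← integral_add_adjacent_intervals (hg₁.congr_uIoo h₁.symm) (hg₂.congr_uIoo h₂.symm),
    integral_congr_uIoo h₁, integral_congr_uIoo h₂]

theorem intervalIntegral.integral_eq_add_add_of_eqOn_Ioo (hab : a ≤ b) (hbc : b ≤ c)
    (hcd : c ≤ d) (h₁ : EqOn g g₁ (Ioo a b)) (h₂ : EqOn g g₂ (Ioo b c))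
    (h₃ : EqOn g g₃ (Ioo c d))
    (hg₁ : IntervalIntegrable g₁ volume a b) (hg₂ : IntervalIntegrable g₂ volume b c)
    (hg₃ : IntervalIntegrable g₃ volume c d) :
    ∫ s in a..d, g s = (∫ s in a..b, g₁ s) + (∫ s in b..c, g₂ s) + ∫ s in c..d, g₃ s := by
  rw [← uIoo_of_le hab] at h₁
  rw [← uIoo_of_le hbc] at h₂
  rw [← uIoo_of_le hcd] at h₃
  have hg₁₂ := (hg₁.congr_uIoo h₁.symm).trans (hg₂.congr_uIoo h₂.symm)
  rw [← integral_add_adjacent_intervals hg₁₂ (hg₃.congr_uIoo h₃.symm),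
    ← integral_add_adjacent_intervals (hg₁.congr_uIoo h₁.symm) (hg₂.congr_uIoo h₂.symm),
    integral_congr_uIoo h₁, integral_congr_uIoo h₂, integral_congr_uIoo h₃]

end Split

section TimeOrder

variable {A : Type*} [Mul A] {f g : ℝ → A} {t₁ t₂ t₃ : ℝ}

theorem timeOrder2_of_le (h : t₂ ≤ t₁) : timeOrder2 f g t₁ t₂ = f t₁ * g t₂ := if_pos h

theorem timeOrder2_of_lt (h : t₁ < t₂) : timeOrder2 f g t₁ t₂ = g t₂ * f t₁ :=
  if_neg (not_le.2 h)

theorem timeOrder3_of_le_of_le (h₂₁ : t₂ ≤ t₁) (h₃₂ : t₃ ≤ t₂) :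
    timeOrder3 f t₁ t₂ t₃ = f t₁ * f t₂ * f t₃ := if_pos ⟨h₂₁, h₃₂⟩

theorem timeOrder3_comm₁₂ (f : ℝ → A) (t₁ t₂ t₃ : ℝ) :
    timeOrder3 f t₁ t₂ t₃ = timeOrder3 f t₂ t₁ t₃ := by
  unfold timeOrder3
  split_ifs <;> grind

theorem timeOrder3_comm₂₃ (f : ℝ → A) (t₁ t₂ t₃ : ℝ) :
    timeOrder3 f t₁ t₂ t₃ = timeOrder3 f t₁ t₃ t₂ := by
  unfold timeOrder3
  split_ifs <;> grind

end TimeOrder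

section TimeOrderedIntegrals

variable {A : Type*} [NormedRing A] [NormedAlgebra ℝ A] [CompleteSpace A]
  {F f G g : ℝ → A} {a b t : ℝ}

theorem integral_timeOrder2 (u : ℝ → A) (hG : ∀ s, HasDerivAt G (g s) s) (hg : Continuous g)
    (ha : 0 ≤ a) (hat : a ≤ t) :
    ∫ s in 0..t, timeOrder2 u g a s = u a * (G a - G 0) + (G t - G a) * u a := by
  have hFTC x y : ∫ s in x..y, g s = G y - G x :=
    integral_eq_sub_of_hasDerivAt (fun s _ => hG s) (hg.intervalIntegrable x y)
  rw [integral_eq_add_of_eqOn_Ioo ha hat (g₁ := fun s => u a * g s) (g₂ := fun s => g s * u a)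
      (fun s hs => timeOrder2_of_le hs.2.le) (fun s hs => timeOrder2_of_lt hs.1)
      ((by fun_prop : Continuous _).intervalIntegrable _ _)
      ((by fun_prop : Continuous _).intervalIntegrable _ _),
    integral_const_mul_of_intervalIntegrable (hg.intervalIntegrable _ _),
    integral_mul_const_of_intervalIntegrable (hg.intervalIntegrable _ _), hFTC, hFTC]

theorem integral_mul_sub_add_sub_mul (hF : ∀ s, HasDerivAt F (f s) s) (hf : Continuous f)
    (hG : ∀ s, HasDerivAt G (g s) s) (hg : Continuous g) (t : ℝ) :
    ∫ s in 0..t, (f s * (G s - G 0) + (G t - G s) * f s)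
      = ∫ s in 0..t, (F t * g s - g s * F 0 + (g s * F s - F s * g s)) := by
  have hFc : Continuous F := Differentiable.continuous fun s => (hF s).differentiableAt
  have hGc : Continuous G := Differentiable.continuous fun s => (hG s).differentiableAt
  have hΨ s : HasDerivAt (fun s => F s * (G s - G 0) - (G s - G 0) * F s + (G t - G 0) * F s
      - F t * (G s - G 0) + (G s - G 0) * F 0)
      (f s * (G s - G 0) + (G t - G s) * f s
        - (F t * g s - g s * F 0 + (g s * F s - F s * g s))) s := by
    have hV := (hG s).sub_const (G 0)
    refine (((((hF s).mul hV).sub (hV.mul (hF s))).add ((hF s).const_mul _)).sub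
      (hV.const_mul (F t))).add (hV.mul_const (F 0)) |>.congr_deriv ?_
    noncomm_ring
  rw [← sub_eq_zero, ← integral_sub ((by fun_prop : Continuous _).intervalIntegrable _ _)
    ((by fun_prop : Continuous _).intervalIntegrable _ _),
    integral_eq_sub_of_hasDerivAt (fun s _ => hΨ s)
      ((by fun_prop : Continuous _).intervalIntegrable _ _)]
  noncomm_ring

theorem integral_integral_timeOrder2 (hF : ∀ s, HasDerivAt F (f s) s) (hf : Continuous f)
    (hg : Continuous g) (ht : 0 ≤ t) :
    ∫ a in 0..t, ∫ b in 0..t, timeOrder2 f g a b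
      = ∫ s in 0..t, (F t * g s - g s * F 0 + (g s * F s - F s * g s)) := by
  have hG s := (hg.integral_hasStrictDerivAt 0 s).hasDerivAt
  rw [← integral_mul_sub_add_sub_mul hF hf hG hg t]
  refine integral_congr fun a ha => ?_
  rw [uIcc_of_le ht] at ha
  exact integral_timeOrder2 f hG hg ha.1 ha.2

theorem integral_timeOrder3_of_le (hF : ∀ s, HasDerivAt F (f s) s) (hf : Continuous f)
    (hb : 0 ≤ b) (hba : b ≤ a) (hat : a ≤ t) :
    ∫ s in 0..t, timeOrder3 f a b s
      = f a * f b * (F b - F 0) + f a * (F a - F b) * f b + (F t - F a) * (f a * f b) := by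
  have hFTC x y : ∫ s in x..y, f s = F y - F x :=
    integral_eq_sub_of_hasDerivAt (fun s _ => hF s) (hf.intervalIntegrable x y)
  rw [integral_eq_add_add_of_eqOn_Ioo hb hba hat
      (g₁ := fun s => f a * f b * f s) (g₂ := fun s => f a * f s * f b)
      (g₃ := fun s => f s * (f a * f b))
      (fun s hs => timeOrder3_of_le_of_le hba hs.2.le)
      (fun s hs => by
        rw [timeOrder3_comm₂₃, timeOrder3_of_le_of_le hs.2.le hs.1.le])
      (fun s hs => by
        rw [timeOrder3_comm₂₃, timeOrder3_comm₁₂, timeOrder3_of_le_of_le hs.1.le hba,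
          mul_assoc])
      ((by fun_prop : Continuous _).intervalIntegrable _ _)
      ((by fun_prop : Continuous _).intervalIntegrable _ _)
      ((by fun_prop : Continuous _).intervalIntegrable _ _),
    integral_const_mul_of_intervalIntegrable (hf.intervalIntegrable _ _),
    integral_const_mul_mul_const (hf.intervalIntegrable _ _),
    integral_mul_const_of_intervalIntegrable (hf.intervalIntegrable _ _), hFTC, hFTC, hFTC]

theorem integral_integral_timeOrder3 (hF : ∀ s, HasDerivAt F (f s) s) (hf : Continuous f)
    (hG : ∀ s, HasDerivAt G (f s * (F s - F 0) - (F s - F 0) * f s) s) (ha : 0 ≤ a)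
    (hat : a ≤ t) :
    ∫ b in 0..t, ∫ s in 0..t, timeOrder3 f a b s
      = f a * (G a - G 0) + (G t - G a) * f a
        + (f a * (F a - F 0) * (F a - F 0) + (F t - F a) * f a * (F a - F 0)
          + (F t - F a) * (f a * (F a - F 0) - (F a - F 0) * f a)
          + (F t - F 0) * (F t - F a) * f a) := by
  have hFc : Continuous F := Differentiable.continuous fun s => (hF s).differentiableAt
  have hFTC x y : ∫ s in x..y, f s = F y - F x :=
    integral_eq_sub_of_hasDerivAt (fun s _ => hF s) (hf.intervalIntegrable x y)
  have hc : Continuous fun s => f s * (F s - F 0) - (F s - F 0) * f s := by fun_prop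
  have hGFTC x y : ∫ s in x..y, (f s * (F s - F 0) - (F s - F 0) * f s) = G y - G x :=
    integral_eq_sub_of_hasDerivAt (fun s _ => hG s) (hc.intervalIntegrable x y)
  -- `G` is a primitive of `[f, F - F 0]`: the inner integrals are a two-point time-ordered
  -- integral of `f` against this commutator plus terms local in `a`.
  rw [integral_eq_add_of_eqOn_Ioo ha hat
      (g₁ := fun b => f a * (f b * (F b - F 0) - (F b - F 0) * f b)
        + (f a * (F a - F 0) + (F t - F a) * f a) * f b)
      (g₂ := fun b => f b * (f a * (F a - F 0) - (F a - F 0) * f a)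
        + (f b * (F b - F 0) - (F b - F 0) * f b) * f a + (F t - F 0) * f b * f a)
      (fun b hb => by
        simp only [integral_timeOrder3_of_le hF hf hb.1.le hb.2.le hat]
        noncomm_ring)
      (fun b hb => by
        simp only [timeOrder3_comm₁₂ f a b,
          integral_timeOrder3_of_le hF hf ha hb.1.le hb.2.le]
        noncomm_ring)
      ((by fun_prop : Continuous _).intervalIntegrable _ _)
      ((by fun_prop : Continuous _).intervalIntegrable _ _),
    intervalIntegral.integral_add,
    integral_const_mul_of_intervalIntegrable (hc.intervalIntegrable _ _),
    integral_const_mul_of_intervalIntegrable (hf.intervalIntegrable _ _),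
    intervalIntegral.integral_add, intervalIntegral.integral_add,
    integral_mul_const_of_intervalIntegrable (hf.intervalIntegrable _ _),
    integral_mul_const_of_intervalIntegrable (hc.intervalIntegrable _ _),
    integral_const_mul_mul_const (hf.intervalIntegrable _ _), hFTC, hFTC, hGFTC, hGFTC]
  · noncomm_ring
  all_goals exact (by fun_prop : Continuous _).intervalIntegrable _ _

theorem integral_integral_integral_timeOrder3 (hF : ∀ s, HasDerivAt F (f s) s)
    (hf : Continuous f) (ht : 0 ≤ t) :
    ∫ a in 0..t, ∫ b in 0..t, ∫ s in 0..t, timeOrder3 f a b s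
      = ∫ s in 0..t, (F t * (f s * (F s - F 0) - (F s - F 0) * f s)
          - (f s * (F s - F 0) - (F s - F 0) * f s) * F 0
          + ((f s * (F s - F 0) - (F s - F 0) * f s) * F s
            - F s * (f s * (F s - F 0) - (F s - F 0) * f s))
          + (f s * (F s - F 0) * (F s - F 0) + (F t - F s) * f s * (F s - F 0)
            + (F t - F s) * (f s * (F s - F 0) - (F s - F 0) * f s)
            + (F t - F 0) * (F t - F s) * f s)) := by
  have hFc : Continuous F := Differentiable.continuous fun s => (hF s).differentiableAt
  have hc : Continuous fun s => f s * (F s - F 0) - (F s - F 0) * f s := by fun_prop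
  have hG s := (hc.integral_hasStrictDerivAt 0 s).hasDerivAt
  have hGc : Continuous fun a => ∫ s in 0..a, (f s * (F s - F 0) - (F s - F 0) * f s) :=
    Differentiable.continuous fun s => (hG s).differentiableAt
  rw [intervalIntegral.integral_add ((by fun_prop : Continuous _).intervalIntegrable _ _)
      ((by fun_prop : Continuous _).intervalIntegrable _ _),
    ← integral_mul_sub_add_sub_mul hF hf hG hc t,
    ← intervalIntegral.integral_add ((by fun_prop : Continuous _).intervalIntegrable _ _)
      ((by fun_prop : Continuous _).intervalIntegrable _ _)]
  refine integral_congr fun a ha => ?_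
  rw [uIcc_of_le ht] at ha
  exact integral_integral_timeOrder3 hF hf hG ha.1 ha.2

theorem matthews_third_order_of_hasDerivAt (hF : ∀ s, HasDerivAt F (f s) s)
    (hf : Continuous f) (ht : 0 ≤ t) :
    (∫ t₁ in (0:ℝ)..t, ∫ t₂ in (0:ℝ)..t, ∫ t₃ in (0:ℝ)..t, timeOrder3 f t₁ t₂ t₃)
      + 3 * (∫ t₁ in (0:ℝ)..t, ∫ t₂ in (0:ℝ)..t,
          timeOrder2 f (fun s => F s * f s - f s * F s) t₁ t₂)
      + (∫ s in (0:ℝ)..t,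
          (F s * (F s * f s - f s * F s) - (F s * f s - f s * F s) * F s))
      = F t * F t * F t - 3 * (F t * F t * F 0) + 3 * (F t * (F 0 * F 0)) - F 0 * F 0 * F 0 := by
  have hFc : Continuous F := Differentiable.continuous fun s => (hF s).differentiableAt
  rw [integral_integral_integral_timeOrder3 hF hf ht,
    integral_integral_timeOrder2 hF hf (by fun_prop) ht,
    ← integral_const_mul_of_intervalIntegrable
      ((by fun_prop : Continuous _).intervalIntegrable _ _),
    ← intervalIntegral.integral_add ((by fun_prop : Continuous _).intervalIntegrable _ _)
      ((by fun_prop : Continuous _).intervalIntegrable _ _),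
    ← intervalIntegral.integral_add ((by fun_prop : Continuous _).intervalIntegrable _ _)
      ((by fun_prop : Continuous _).intervalIntegrable _ _)]
  -- found by solving for a cubic in `F s`, with coefficients in `F 0`, `F t`, that
  -- differentiates to the integrand
  refine (integral_eq_sub_of_hasDerivAt (f := fun s => F s * F s * F 0 - 2 * (F s * F 0 * F s)
      + F 0 * F s * F s + (F t * F t + 2 * (F t * F 0) - F 0 * F t) * F s
      + F s * (2 * (F 0 * F 0)) - (3 * F t + F 0) * F s * F 0) (fun s _ => ?_) ?_).trans ?_
  · have hP := hF s
    refine ((((((hP.mul hP).mul_const _).sub (((hP.mul_const _).mul hP).const_mul _)).add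
      ((hP.const_mul _).mul hP)).add (hP.const_mul _)).add (hP.mul_const _)).sub
      ((hP.const_mul _).mul_const _) |>.congr_deriv ?_
    noncomm_ring
  · exact (by fun_prop : Continuous _).intervalIntegrable _ _
  · noncomm_ring

end TimeOrderedIntegrals

section ComplexSMul

variable {M : Type*} [AddCommGroup M] [Module ℂ M]

theorem I_mul_ofReal_smul (x : M) (u : ℝ) : (Complex.I * u) • x = u • (Complex.I • x) := by
  rw [← smul_assoc, Complex.real_smul, mul_comm]

theorem neg_I_mul_ofReal_smul (x : M) (u : ℝ) :
    (-(Complex.I * u)) • x = u • -(Complex.I • x) := by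
  rw [neg_smul, I_mul_ofReal_smul, smul_neg]

end ComplexSMul

section Heisenberg

open NormedSpace

variable {A : Type*} [NormedRing A] [NormedAlgebra ℂ A] [CompleteSpace A]

theorem heisQ_zero (H Q : A) : heisQ H Q 0 = Q := by
  simp [heisQ]

theorem heisQ_eq_exp_real_smul (H Q : A) :
    heisQ H Q = fun u : ℝ => exp (u • (Complex.I • H)) * Q * exp (u • -(Complex.I • H)) :=
  funext fun u => by rw [heisQ, I_mul_ofReal_smul, neg_I_mul_ofReal_smul]

theorem heisI_eq_exp_real_smul (H Q : A) :
    heisI H Q = fun u : ℝ => Complex.I • (exp (u • (Complex.I • H)) * (H * Q - Q * H)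
      * exp (u • -(Complex.I • H))) :=
  funext fun u => by rw [heisI, I_mul_ofReal_smul, neg_I_mul_ofReal_smul]

theorem continuous_heisI (H Q : A) : Continuous (heisI H Q) := by
  have hexp (B : A) : Continuous fun u : ℝ => exp (u • B) :=
    continuous_iff_continuousAt.2 fun u => (hasDerivAt_exp_smul_const B u).continuousAt
  rw [heisI_eq_exp_real_smul]
  fun_prop

theorem hasDerivAt_heisQ (H Q : A) (s : ℝ) : HasDerivAt (heisQ H Q) (heisI H Q s) s := by
  have hcomm : exp (s • -(Complex.I • H)) * (Complex.I • H)
      = (Complex.I • H) * exp (s • -(Complex.I • H)) :=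
    ((Commute.refl _).neg_right.smul_right s).exp_right.symm.eq
  rw [heisQ_eq_exp_real_smul, heisI_eq_exp_real_smul]
  refine ((hasDerivAt_exp_smul_const _ s).mul_const Q).mul (hasDerivAt_exp_smul_const _ s)
    |>.congr_deriv ?_
  rw [mul_neg, hcomm]
  simp only [smul_mul_assoc, mul_smul_comm, mul_sub, sub_mul, smul_sub]
  noncomm_ring

end Heisenberg

/-- Third-order coefficient of the identity equating the `T`-ordered exponential of the
interaction Hamiltonian with the Matthews `T*`-ordered exponential of the current:
`∫₀ᵗ∫₀ᵗ∫₀ᵗ T(I₁I₂I₃) + 3∫₀ᵗ∫₀ᵗ T(I₁[Q₂,I₂]) + ∫₀ᵗ [Q,[Q,I]](s) ds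
  = Q(t)³ − 3Q(t)²Q + 3Q(t)Q² − Q³`. -/
theorem matthews_third_order {A : Type*} [NormedRing A] [NormedAlgebra ℂ A]
    [CompleteSpace A] (H Q : A) (t : ℝ) (ht : 0 ≤ t) :
    (∫ t₁ in (0:ℝ)..t, ∫ t₂ in (0:ℝ)..t, ∫ t₃ in (0:ℝ)..t,
        timeOrder3 (heisI H Q) t₁ t₂ t₃)
      + 3 * (∫ t₁ in (0:ℝ)..t, ∫ t₂ in (0:ℝ)..t,
          timeOrder2 (heisI H Q)
            (fun s => heisQ H Q s * heisI H Q s - heisI H Q s * heisQ H Q s) t₁ t₂)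
      + (∫ s in (0:ℝ)..t,
          (heisQ H Q s * (heisQ H Q s * heisI H Q s - heisI H Q s * heisQ H Q s)
            - (heisQ H Q s * heisI H Q s - heisI H Q s * heisQ H Q s) * heisQ H Q s))
      = heisQ H Q t * heisQ H Q t * heisQ H Q t
        - 3 * (heisQ H Q t * heisQ H Q t * Q)
        + 3 * (heisQ H Q t * (Q * Q))
        - Q * Q * Q := by
  have h := matthews_third_order_of_hasDerivAt (hasDerivAt_heisQ H Q) (continuous_heisI H Q) ht
  rwa [heisQ_zero] at h
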